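/- For every element g of the commutator subgroup [Γ,Γ] of the Gupta–Sidki group Γ and every word v ∈ X*, the permutation v*g belongs to Γ. -/

import Mathlib

namespace AutSG

variable {X Q : Type*}

/-- The action of a state `q` of a Mealy automaton with transition function `δ`
and output function `out` on finite words over the alphabet `X`. -/
def mAct (δ : Q → X → Q) (out : Q → X → X) : Q → List X → List X
  | _, [] => []
  | q, x :: w => out q x :: mAct δ out (δ q x) w

theorem mAct_bijective (δ : Q → X → Q) (out : Q → X → X)
    (hout : ∀ q, Function.Bijective (out q)) (q : Q) :
    Function.Bijective (mAct δ out q) := by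
  have key : ∀ (l₁ : List X) (q : Q) (l₂ : List X),
      mAct δ out q l₁ = mAct δ out q l₂ → l₁ = l₂ := by
    intro l₁
    induction l₁ with
    | nil =>
      intro q l₂ h
      cases l₂ with
      | nil => rfl
      | cons y u => exact absurd h (by simp [mAct])
    | cons x w ih =>
      intro q l₂ h
      cases l₂ with
      | nil => exact absurd h (by simp [mAct])
      | cons y u =>
        simp only [mAct, List.cons.injEq] at h
        obtain rfl : x = y := (hout q).1 h.1
        rw [ih (δ q x) u h.2]
  have key2 : ∀ (l : List X) (q : Q), ∃ m, mAct δ out q m = l := by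
    intro l
    induction l with
    | nil => exact fun q => ⟨[], rfl⟩
    | cons y u ih =>
      intro q
      obtain ⟨x, hx⟩ := (hout q).2 y
      obtain ⟨m, hm⟩ := ih (δ q x)
      exact ⟨x :: m, by simp [mAct, hx, hm]⟩
  exact ⟨fun {l₁ l₂} h => key l₁ q l₂ h, fun l => key2 l q⟩

/-- The permutation of `X*` induced by the state `q` of an invertible Mealy automaton,
as an element of `Equiv.Perm (List X)`.  We use the convention that permutations act
on the *right* via `rApp` below, so that the Lean group multiplication `g * h`
corresponds to "first `g`, then `h`", as in the usual convention for automaton groups. -/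
noncomputable def genPerm (δ : Q → X → Q) (out : Q → X → X)
    (hout : ∀ q, Function.Bijective (out q)) (q : Q) : Equiv.Perm (List X) :=
  (Equiv.ofBijective _ (mAct_bijective δ out hout q))⁻¹

/-- Right action of a permutation on words: `rApp g w` is `w^g`.
Note `rApp (g * h) w = rApp h (rApp g w)`. -/
def rApp (g : Equiv.Perm (List X)) (w : List X) : List X := g⁻¹ w

theorem rApp_genPerm (δ : Q → X → Q) (out : Q → X → X)
    (hout : ∀ q, Function.Bijective (out q)) (q : Q) (w : List X) :
    rApp (genPerm δ out hout q) w = mAct δ out q w := by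
  simp [rApp, genPerm, Equiv.ofBijective]

/-- Commutator with the convention `[x,y] = x⁻¹y⁻¹xy`. -/
def comm {G : Type*} [Group G] (x y : G) : G := x⁻¹ * y⁻¹ * x * y

/-- Conjugation with the convention `y^z = z⁻¹yz`. -/
def conj {G : Type*} [Group G] (y z : G) : G := z⁻¹ * y * z

/-- Iterated commutators: `E₀(g,h) = g`, `E_{c+1}(g,h) = [E_c(g,h), h]`. -/
def engel {G : Type*} [Group G] : ℕ → G → G → G
  | 0, g, _ => g
  | c + 1, g, h => comm (engel c g h) h

/-- `vStar v k` is the permutation `v*k` of `X*`: it maps `v ++ w` to `v ++ w^k`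
(with respect to the right action `rApp`) and fixes every word not having `v`
as a prefix. -/
def vStar [DecidableEq X] (v : List X) (k : Equiv.Perm (List X)) :
    Equiv.Perm (List X) where
  toFun w := if v <+: w then v ++ k (w.drop v.length) else w
  invFun w := if v <+: w then v ++ k.symm (w.drop v.length) else w
  left_inv w := by
    by_cases h : v <+: w
    · simp only [if_pos h, if_pos (List.prefix_append v _), List.drop_left,
        Equiv.symm_apply_apply]
      exact List.prefix_iff_eq_append.mp h
    · simp only [if_neg h]
  right_inv w := by
    by_cases h : v <+: w
    · simp only [if_pos h, if_pos (List.prefix_append v _), List.drop_left,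
        Equiv.apply_symm_apply]
      exact List.prefix_iff_eq_append.mp h
    · simp only [if_neg h]

end AutSG
namespace AutSG

/-- States of the Gupta–Sidki automaton: `a`, `a⁻¹` (written `ai`), `t`,
and the identity state `e`. -/
inductive GSQ | a | ai | t | e
deriving DecidableEq

/-- Transition function of the Gupta–Sidki automaton (letters `1,2,3` are
`0,1,2 : Fin 3`). -/
def gsδ : GSQ → Fin 3 → GSQ
  | .t, 0 => .a
  | .t, 1 => .ai
  | .t, _ => .t
  | _, _ => .e

/-- Output: `a` is the 3-cycle `1 ↦ 2 ↦ 3 ↦ 1`, `ai` its inverse,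
the other states act trivially on letters. -/
def gsOut : GSQ → Fin 3 → Fin 3
  | .a, x => x + 1
  | .ai, x => x + 2
  | _, x => x

theorem gsOut_bij : ∀ q, Function.Bijective (gsOut q) := by
  intro q; cases q <;> decide

/-- The generator `a` of the Gupta–Sidki group: `(1w)^a = 2w`, `(2w)^a = 3w`,
`(3w)^a = 1w`. -/
noncomputable def gsa : Equiv.Perm (List (Fin 3)) := genPerm gsδ gsOut gsOut_bij .a
/-- The generator `t`: `(1w)^t = 1(w^a)`, `(2w)^t = 2(w^{a⁻¹})`, `(3w)^t = 3(w^t)`. -/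
noncomputable def gst : Equiv.Perm (List (Fin 3)) := genPerm gsδ gsOut gsOut_bij .t

/-- The Gupta–Sidki group `Γ`, as the subgroup of the permutation group of
`{1,2,3}*` generated by `a` and `t`. -/
noncomputable def GuptaSidki : Subgroup (Equiv.Perm (List (Fin 3))) :=
  Subgroup.closure {gsa, gst}

end AutSG

namespace AutSG

theorem vStar_apply [DecidableEq X] (v : List X) (k : Equiv.Perm (List X)) (w : List X) :
    vStar v k w = if v <+: w then v ++ k (w.drop v.length) else w := rfl

theorem vStar_nil [DecidableEq X] (k : Equiv.Perm (List X)) : vStar [] k = k := by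
  refine Equiv.ext fun w => ?_; simp [vStar_apply]

theorem vStar_one [DecidableEq X] (v : List X) :
    vStar v (1 : Equiv.Perm (List X)) = 1 := by
  refine Equiv.ext fun w => ?_
  simp only [vStar_apply, Equiv.Perm.coe_one, id_eq]
  split
  · next h => exact List.prefix_iff_eq_append.mp h
  · rfl

theorem vStar_mul [DecidableEq X] (v : List X) (g h : Equiv.Perm (List X)) :
    vStar v (g * h) = vStar v g * vStar v h := by
  refine Equiv.ext fun w => ?_
  by_cases hp : v <+: w
  · simp [vStar_apply, hp, List.prefix_append, Equiv.Perm.mul_apply]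
  · simp [vStar_apply, hp]

theorem vStar_cons [DecidableEq X] (i : X) (v : List X) (k : Equiv.Perm (List X)) :
    vStar (i :: v) k = vStar [i] (vStar v k) := by
  refine Equiv.ext fun w => ?_
  cases w with
  | nil => simp [vStar_apply]
  | cons j u =>
    by_cases hij : i = j <;> by_cases hvu : v <+: u <;>
      simp [vStar_apply, List.cons_prefix_cons, hij, hvu]


theorem mAct_e (w : List (Fin 3)) : mAct gsδ gsOut .e w = w := by
  induction w with
  | nil => rfl
  | cons x u ih => simp [mAct, gsδ, gsOut, ih]

theorem gsa_inv_apply (w : List (Fin 3)) : gsa⁻¹ w = mAct gsδ gsOut .a w := rfl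

theorem gst_inv_apply (w : List (Fin 3)) : gst⁻¹ w = mAct gsδ gsOut .t w := rfl

theorem mAct_a_ai (w : List (Fin 3)) :
    mAct gsδ gsOut .a (mAct gsδ gsOut .ai w) = w := by
  cases w with
  | nil => rfl
  | cons j u =>
    show (j + 2 + 1) :: mAct gsδ gsOut .e (mAct gsδ gsOut .e u) = j :: u
    rw [mAct_e, mAct_e]
    congr 1
    fin_cases j <;> rfl

theorem gsa_apply (w : List (Fin 3)) : gsa w = mAct gsδ gsOut .ai w := by
  apply (mAct_bijective gsδ gsOut gsOut_bij .a).1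
  rw [mAct_a_ai, ← gsa_inv_apply]
  exact gsa.symm_apply_apply w

theorem gsa_cons (j : Fin 3) (u : List (Fin 3)) : gsa (j :: u) = (j + 2) :: u := by
  rw [gsa_apply]; show (j+2) :: mAct gsδ gsOut .e u = _; rw [mAct_e]

theorem gsa_nil : gsa ([] : List (Fin 3)) = [] := by rw [gsa_apply]; rfl

theorem gsa_inv_cons (j : Fin 3) (u : List (Fin 3)) : gsa⁻¹ (j :: u) = (j + 1) :: u := by
  rw [gsa_inv_apply]; show (j+1) :: mAct gsδ gsOut .e u = _; rw [mAct_e]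

theorem gsa_inv_nil : gsa⁻¹ ([] : List (Fin 3)) = [] := rfl

/-- `P3 g0 g1 g2` is the element `(g0, g1, g2)` of the "geometric" first-level
stabilizer: it maps `i :: u` to `i :: gᵢ u`. -/
noncomputable def P3 (g0 g1 g2 : Equiv.Perm (List (Fin 3))) : Equiv.Perm (List (Fin 3)) :=
  vStar [0] g0 * vStar [1] g1 * vStar [2] g2

theorem vStar_single_cons (i j : Fin 3) (k : Equiv.Perm (List (Fin 3))) (u : List (Fin 3)) :
    vStar [i] k (j :: u) = if i = j then i :: k u else j :: u := by
  by_cases h : i = j <;> simp [vStar_apply, List.cons_prefix_cons, h]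

theorem fin3 (j : Fin 3) : j = 0 ∨ j = 1 ∨ j = 2 := by revert j; decide

theorem f01 : (0:Fin 3)+1 = 1 := rfl
theorem f11 : (1:Fin 3)+1 = 2 := rfl
theorem f21 : (2:Fin 3)+1 = 0 := rfl
theorem f02 : (0:Fin 3)+2 = 2 := rfl
theorem f12 : (1:Fin 3)+2 = 0 := rfl
theorem f22 : (2:Fin 3)+2 = 1 := rfl

theorem P3_nil (g0 g1 g2 : Equiv.Perm (List (Fin 3))) : P3 g0 g1 g2 [] = [] := rfl

theorem P3_cons0 (g0 g1 g2 : Equiv.Perm (List (Fin 3))) (u : List (Fin 3)) :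
    P3 g0 g1 g2 ((0 : Fin 3) :: u) = 0 :: g0 u := by
  simp [P3, Equiv.Perm.mul_apply, vStar_single_cons]

theorem P3_cons1 (g0 g1 g2 : Equiv.Perm (List (Fin 3))) (u : List (Fin 3)) :
    P3 g0 g1 g2 ((1 : Fin 3) :: u) = 1 :: g1 u := by
  simp [P3, Equiv.Perm.mul_apply, vStar_single_cons]

theorem P3_cons2 (g0 g1 g2 : Equiv.Perm (List (Fin 3))) (u : List (Fin 3)) :
    P3 g0 g1 g2 ((2 : Fin 3) :: u) = 2 :: g2 u := by
  simp [P3, Equiv.Perm.mul_apply, vStar_single_cons]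

theorem P3_mul (g0 g1 g2 h0 h1 h2 : Equiv.Perm (List (Fin 3))) :
    P3 g0 g1 g2 * P3 h0 h1 h2 = P3 (g0 * h0) (g1 * h1) (g2 * h2) := by
  refine Equiv.ext fun w => ?_
  cases w with
  | nil => rfl
  | cons j u =>
    rcases fin3 j with rfl | rfl | rfl <;>
      simp [Equiv.Perm.mul_apply, P3_cons0, P3_cons1, P3_cons2]

theorem P3_one : P3 1 1 1 = 1 := by
  simp [P3, vStar_one]

theorem P3_inv (g0 g1 g2 : Equiv.Perm (List (Fin 3))) :
    (P3 g0 g1 g2)⁻¹ = P3 g0⁻¹ g1⁻¹ g2⁻¹ := by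
  symm
  apply eq_inv_of_mul_eq_one_left
  rw [P3_mul]
  simp [P3_one]

theorem P3_conj (g0 g1 g2 : Equiv.Perm (List (Fin 3))) :
    gsa⁻¹ * P3 g0 g1 g2 * gsa = P3 g2 g0 g1 := by
  refine Equiv.ext fun w => ?_
  cases w with
  | nil =>
    simp [Equiv.Perm.mul_apply, gsa_nil, P3_nil, gsa_inv_nil]
  | cons j u =>
    rcases fin3 j with rfl | rfl | rfl <;>
      simp [Equiv.Perm.mul_apply, gsa_cons, gsa_inv_cons,
        P3_cons0, P3_cons1, P3_cons2, f01, f11, f21, f02, f12, f22]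

theorem gsa_sq : gsa * gsa = gsa⁻¹ := by
  refine Equiv.ext fun w => ?_
  cases w with
  | nil => simp [Equiv.Perm.mul_apply, gsa_nil, gsa_inv_nil]
  | cons j u =>
    rw [Equiv.Perm.mul_apply, gsa_cons, gsa_cons, gsa_inv_cons]
    congr 1
    rcases fin3 j with rfl | rfl | rfl <;> rfl

theorem gst_inv_eq : gst⁻¹ = P3 gsa⁻¹ gsa gst⁻¹ := by
  refine Equiv.ext fun w => ?_
  cases w with
  | nil => rfl
  | cons j u =>
    rw [gst_inv_apply]
    rcases fin3 j with rfl | rfl | rfl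
    · show (0 : Fin 3) :: mAct gsδ gsOut .a u = _
      rw [P3_cons0, gsa_inv_apply]
    · show (1 : Fin 3) :: mAct gsδ gsOut .ai u = _
      rw [P3_cons1, gsa_apply]
    · show (2 : Fin 3) :: mAct gsδ gsOut .t u = _
      rw [P3_cons2, gst_inv_apply]

theorem gst_eq : gst = P3 gsa gsa⁻¹ gst := by
  have := congrArg (·⁻¹) gst_inv_eq
  simpa [P3_inv] using this

theorem v0_eq (g : Equiv.Perm (List (Fin 3))) : vStar [(0 : Fin 3)] g = P3 g 1 1 := by
  simp [P3, vStar_one]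

theorem v1_eq (g : Equiv.Perm (List (Fin 3))) : vStar [(1 : Fin 3)] g = P3 1 g 1 := by
  simp [P3, vStar_one]

theorem v2_eq (g : Equiv.Perm (List (Fin 3))) : vStar [(2 : Fin 3)] g = P3 1 1 g := by
  simp [P3, vStar_one]


open Subgroup
open scoped commutatorElement

/-- `vStar v` as a monoid hom. -/
def vHom (v : List (Fin 3)) : Equiv.Perm (List (Fin 3)) →* Equiv.Perm (List (Fin 3)) where
  toFun := vStar v
  map_one' := vStar_one v
  map_mul' := vStar_mul v

theorem gsa_mem : gsa ∈ GuptaSidki := subset_closure (by simp)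
theorem gst_mem : gst ∈ GuptaSidki := subset_closure (by simp)

local notation "D" => ⁅GuptaSidki, GuptaSidki⁆

theorem D_le : D ≤ GuptaSidki := by
  rw [commutator_le]
  intro g hg h hh
  rw [commutatorElement_def]
  exact mul_mem (mul_mem (mul_mem hg hh) (inv_mem hg)) (inv_mem hh)

theorem D_conj {x d : Equiv.Perm (List (Fin 3))} (hx : x ∈ GuptaSidki) (hd : d ∈ D) :
    x⁻¹ * d * x ∈ D := by
  have key : D ≤ Subgroup.comap (MulAut.conj x⁻¹).toMonoidHom D := by
    rw [commutator_le]
    intro g hg h hh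
    rw [mem_comap, map_commutatorElement]
    refine commutator_mem_commutator ?_ ?_
    · simpa [MulAut.conj] using mul_mem (mul_mem (inv_mem hx) hg) hx
    · simpa [MulAut.conj] using mul_mem (mul_mem (inv_mem hx) hh) hx
  have h2 := key hd
  simpa [MulAut.conj, mul_assoc] using h2

theorem D_conj' {x d : Equiv.Perm (List (Fin 3))} (hx : x ∈ GuptaSidki) (hd : d ∈ D) :
    x * d * x⁻¹ ∈ D := by
  simpa using D_conj (inv_mem hx) hd

/-- Every element of `Γ` is the first coordinate of some element of `Γ` of the
form `P3 y c d`. -/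
theorem exists_lift {y : Equiv.Perm (List (Fin 3))} (hy : y ∈ GuptaSidki) :
    ∃ c d, P3 y c d ∈ GuptaSidki := by
  induction hy using Subgroup.closure_induction with
  | mem z hz =>
    rcases hz with rfl | rfl
    · exact ⟨gsa⁻¹, gst, by rw [← gst_eq]; exact gst_mem⟩
    · refine ⟨gsa, gsa⁻¹, ?_⟩
      have h : gsa⁻¹ * gst * gsa = P3 gst gsa gsa⁻¹ := by
        nth_rewrite 1 [gst_eq]
        rw [P3_conj]
      rw [← h]
      exact mul_mem (mul_mem (inv_mem gsa_mem) gst_mem) gsa_mem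
  | one => exact ⟨1, 1, by rw [P3_one]; exact one_mem _⟩
  | mul z w _ _ hz hw =>
    obtain ⟨c, d, hc⟩ := hz
    obtain ⟨c', d', hc'⟩ := hw
    exact ⟨c * c', d * d', by rw [← P3_mul]; exact mul_mem hc hc'⟩
  | inv z _ hz =>
    obtain ⟨c, d, hc⟩ := hz
    exact ⟨c⁻¹, d⁻¹, by rw [← P3_inv]; exact inv_mem hc⟩

noncomputable def ta : Equiv.Perm (List (Fin 3)) := gsa⁻¹ * gst * gsa
noncomputable def ta2 : Equiv.Perm (List (Fin 3)) := gsa⁻¹ * ta * gsa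

theorem ta_mem : ta ∈ GuptaSidki :=
  mul_mem (mul_mem (inv_mem gsa_mem) gst_mem) gsa_mem
theorem ta2_mem : ta2 ∈ GuptaSidki :=
  mul_mem (mul_mem (inv_mem gsa_mem) ta_mem) gsa_mem

theorem ta_eq : ta = P3 gst gsa gsa⁻¹ := by
  rw [ta]
  nth_rewrite 1 [gst_eq]
  rw [P3_conj]

theorem ta2_eq : ta2 = P3 gsa⁻¹ gst gsa := by
  rw [ta2]
  nth_rewrite 1 [ta_eq]
  rw [P3_conj]

/-- The key splitting identity. -/
theorem key_identity :
    gst * ta * ta2 * (ta2 * ta * gst)⁻¹ =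
      P3 (gsa * gst * gsa * gst⁻¹ * gsa) 1 1 := by
  have haa : gsa⁻¹ * gsa⁻¹ = gsa := by
    rw [← mul_inv_rev, gsa_sq, inv_inv]
  have hx : gst * ta * ta2 = P3 (gsa * gst * gsa⁻¹) gst gst := by
    nth_rewrite 1 [gst_eq]
    rw [ta_eq, ta2_eq, P3_mul, P3_mul]
    congr 1 <;> group
  have hz : ta2 * ta * gst = P3 (gsa⁻¹ * gst * gsa) gst gst := by
    nth_rewrite 1 [gst_eq]
    rw [ta_eq, ta2_eq, P3_mul, P3_mul]
    congr 1 <;> group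
  rw [hx, hz, P3_inv, P3_mul]
  congr 1
  · calc gsa * gst * gsa⁻¹ * (gsa⁻¹ * gst * gsa)⁻¹
        = gsa * gst * (gsa⁻¹ * gsa⁻¹) * gst⁻¹ * gsa := by group
      _ = gsa * gst * gsa * gst⁻¹ * gsa := by rw [haa]
  · group
  · group

theorem s_mem : P3 (gsa * gst * gsa * gst⁻¹ * gsa) 1 1 ∈ D := by
  rw [← key_identity]
  have hexp : gst * ta * ta2 * (ta2 * ta * gst)⁻¹ =
      ⁅gst, ta⁆ * (ta * ⁅gst, ta2⁆ * ta⁻¹) * ⁅ta, ta2⁆ := by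
    rw [commutatorElement_def, commutatorElement_def, commutatorElement_def]
    group
  rw [hexp]
  refine mul_mem (mul_mem (commutator_mem_commutator gst_mem ta_mem) ?_)
    (commutator_mem_commutator ta_mem ta2_mem)
  exact D_conj' ta_mem (commutator_mem_commutator gst_mem ta2_mem)

/-- The subgroup of `Γ` of elements `g` with `0∗g ∈ Γ'`. -/
noncomputable def M' : Subgroup ↥GuptaSidki :=
  Subgroup.comap ((vHom [0]).comp GuptaSidki.subtype) D

theorem mem_M' (x : ↥GuptaSidki) :
    x ∈ M' ↔ vStar [0] (x : Equiv.Perm (List (Fin 3))) ∈ D :=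
  Iff.rfl

instance M'_normal : M'.Normal := by
  constructor
  intro n hn g
  rw [mem_M'] at hn ⊢
  obtain ⟨c, d, hH⟩ := exists_lift g.2
  have hcoe : ((g * n * g⁻¹ : ↥GuptaSidki) : Equiv.Perm (List (Fin 3))) =
      (g : Equiv.Perm (List (Fin 3))) * n * (g : Equiv.Perm (List (Fin 3)))⁻¹ := rfl
  rw [hcoe, v0_eq]
  have heq : P3 ((g : Equiv.Perm (List (Fin 3))) * n * (g : Equiv.Perm (List (Fin 3)))⁻¹) 1 1 =
      P3 (g : Equiv.Perm (List (Fin 3))) c d * P3 (n : Equiv.Perm (List (Fin 3))) 1 1 *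
        (P3 (g : Equiv.Perm (List (Fin 3))) c d)⁻¹ := by
    rw [P3_inv, P3_mul, P3_mul]
    congr 1 <;> group
  rw [heq]
  rw [v0_eq] at hn
  exact D_conj' hH hn

noncomputable def AG : ↥GuptaSidki := ⟨gsa, gsa_mem⟩
noncomputable def TG : ↥GuptaSidki := ⟨gst, gst_mem⟩

theorem gen_top : Subgroup.closure {AG, TG} = (⊤ : Subgroup ↥GuptaSidki) := by
  rw [eq_top_iff]
  rintro ⟨x, hx⟩ -
  induction hx using Subgroup.closure_induction with
  | mem z hz =>
    rcases hz with rfl | rfl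
    · exact subset_closure (Or.inl rfl)
    · exact subset_closure (Or.inr rfl)
  | one => exact one_mem _
  | mul z w hz hw hz' hw' => exact mul_mem hz' hw'
  | inv z hz hz' => exact inv_mem hz'

noncomputable def s0G : ↥GuptaSidki := AG * TG * AG * TG⁻¹ * AG

noncomputable def N' : Subgroup ↥GuptaSidki := Subgroup.normalClosure {s0G}

instance N'_norm : N'.Normal := Subgroup.normalClosure_normal

theorem gsa3 : gsa * gsa * gsa = 1 := by
  rw [gsa_sq, inv_mul_cancel]

theorem AG3 : AG * AG * AG = 1 := Subtype.ext gsa3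

theorem comm_AT :
    Commute (QuotientGroup.mk' N' AG) (QuotientGroup.mk' N' TG) := by
  set π := QuotientGroup.mk' N'
  set x := π AG with hxdef
  set y := π TG with hydef
  have h1 : x * y * x * y⁻¹ * x = 1 := by
    have hs : π s0G = 1 :=
      (QuotientGroup.eq_one_iff _).mpr
        (Subgroup.subset_normalClosure (Set.mem_singleton _))
    simpa [s0G, map_mul, map_inv] using hs
  have hx3 : x * x * x = 1 := by
    rw [hxdef, ← map_mul, ← map_mul, AG3, map_one]
  have hxinv : x⁻¹ = x * x := by
    rw [inv_eq_iff_mul_eq_one, ← mul_assoc]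
    exact hx3
  have h2 : x * y * x = x⁻¹ * y := by
    calc x * y * x = (x * y * x * y⁻¹ * x) * x⁻¹ * y := by group
      _ = x⁻¹ * y := by rw [h1]; group
  have h3 : y * x = x * y := by
    have e := congrArg (fun z => x⁻¹ * z) h2
    calc y * x = x⁻¹ * (x * y * x) := by group
      _ = x⁻¹ * (x⁻¹ * y) := by rw [h2]
      _ = x * x * (x * x * y) := by rw [hxinv]
      _ = (x * x * x) * (x * y) := by group
      _ = x * y := by rw [hx3, one_mul]
  exact h3.symm

theorem comm_all (q r : ↥GuptaSidki) :
    Commute (QuotientGroup.mk' N' q) (QuotientGroup.mk' N' r) := by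
  set π := QuotientGroup.mk' N'
  have hA : ∀ z ∈ Subgroup.closure {AG, TG}, Commute (π AG) (π z) := by
    intro z hz
    induction hz using Subgroup.closure_induction with
    | mem w hw => rcases hw with rfl | rfl
                  · exact Commute.refl _
                  · exact comm_AT
    | one => rw [map_one]; exact Commute.one_right _
    | mul u w hu hw hu' hw' => rw [map_mul]; exact hu'.mul_right hw'
    | inv u hu hu' => rw [map_inv]; exact hu'.inv_right
  have hT : ∀ z ∈ Subgroup.closure {AG, TG}, Commute (π TG) (π z) := by
    intro z hz
    induction hz using Subgroup.closure_induction with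
    | mem w hw => rcases hw with rfl | rfl
                  · exact comm_AT.symm
                  · exact Commute.refl _
    | one => rw [map_one]; exact Commute.one_right _
    | mul u w hu hw hu' hw' => rw [map_mul]; exact hu'.mul_right hw'
    | inv u hu hu' => rw [map_inv]; exact hu'.inv_right
  have hq : q ∈ Subgroup.closure {AG, TG} := gen_top ▸ Subgroup.mem_top q
  have hr : r ∈ Subgroup.closure {AG, TG} := gen_top ▸ Subgroup.mem_top r
  induction hq using Subgroup.closure_induction with
  | mem w hw => rcases hw with rfl | rfl
                · exact hA r hr
                · exact hT r hr
  | one => rw [map_one]; exact Commute.one_left _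
  | mul u w hu hw hu' hw' => rw [map_mul]; exact hu'.mul_left hw'
  | inv u hu hu' => rw [map_inv]; exact hu'.inv_left

theorem commutator_mem_N' (x y : ↥GuptaSidki) : ⁅x, y⁆ ∈ N' := by
  rw [← QuotientGroup.eq_one_iff (G := ↥GuptaSidki) (N := N')]
  rw [show ((⁅x, y⁆ : ↥GuptaSidki) : ↥GuptaSidki ⧸ N') =
      QuotientGroup.mk' N' ⁅x, y⁆ from rfl]
  rw [map_commutatorElement]
  exact commutatorElement_eq_one_iff_commute.mpr (comm_all x y)

theorem key0 {g : Equiv.Perm (List (Fin 3))} (hg : g ∈ D) :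
    vStar [0] g ∈ D := by
  have hD_le_N : D ≤ Subgroup.map GuptaSidki.subtype N' := by
    rw [commutator_le]
    intro p hp q hq
    exact ⟨⁅(⟨p, hp⟩ : ↥GuptaSidki), ⟨q, hq⟩⁆, commutator_mem_N' _ _, rfl⟩
  obtain ⟨x, hxN, rfl⟩ := hD_le_N hg
  have hNM : N' ≤ M' := by
    apply Subgroup.normalClosure_le_normal
    intro z hz
    rw [Set.mem_singleton_iff] at hz
    subst hz
    rw [SetLike.mem_coe, mem_M']
    have : (s0G : Equiv.Perm (List (Fin 3))) = gsa * gst * gsa * gst⁻¹ * gsa := rfl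
    rw [this, v0_eq]
    exact s_mem
  exact (mem_M' x).mp (hNM hxN)

theorem key_letter {g : Equiv.Perm (List (Fin 3))} (hg : g ∈ D) (i : Fin 3) :
    vStar [i] g ∈ D := by
  have h0 := key0 hg
  have h1 : vStar [(1 : Fin 3)] g ∈ D := by
    have : vStar [(1 : Fin 3)] g = gsa⁻¹ * vStar [(0 : Fin 3)] g * gsa := by
      rw [v0_eq, v1_eq, P3_conj]
    rw [this]
    exact D_conj gsa_mem h0
  have h2 : vStar [(2 : Fin 3)] g ∈ D := by
    have : vStar [(2 : Fin 3)] g = gsa⁻¹ * vStar [(1 : Fin 3)] g * gsa := by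
      rw [v1_eq, v2_eq, P3_conj]
    rw [this]
    exact D_conj gsa_mem h1
  rcases fin3 i with rfl | rfl | rfl
  · exact h0
  · exact h1
  · exact h2

theorem key_word {g : Equiv.Perm (List (Fin 3))} (hg : g ∈ D) (v : List (Fin 3)) :
    vStar v g ∈ D := by
  induction v with
  | nil => rw [vStar_nil]; exact hg
  | cons i u ih => rw [vStar_cons]; exact key_letter ih i

end AutSG

open AutSG in
/-- For every element `g` of the commutator subgroup `[Γ,Γ]` of the Gupta–Sidki
group `Γ` and every word `v`, the permutation `v*g` belongs to `Γ`. -/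
theorem guptasidki_branching :
    ∀ g ∈ ⁅GuptaSidki, GuptaSidki⁆, ∀ v : List (Fin 3), vStar v g ∈ GuptaSidki :=
  fun g hg v => D_le (key_word hg v)
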